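/- arXiv:2407.20363 — 4 statements merged into one kernel-verified Lean document; each statement's English description precedes it below -/
import Mathlib

section
/- Let X be a class of modules closed under isomorphism. If there exists an infinite cardinal κ such that X is closed under direct limits of well-ordered direct systems indexed by ordinals of cardinality at least κ, then X is closed under all well-ordered direct limits. -/
/-!
Given a well-ordered system indexed by `o ≠ 0`, pick an ordinal `c ≠ 0` with `κ ≤ card c` and
reindex the system along `i ↦ i / c` from `c * o` onto `o`. This map is the upper adjoint of
`q ↦ c * q`, so it is cofinal and the reindexed system, whose index ordinal `c * o` has
cardinality at least `κ`, has the same direct limit.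
-/

namespace Module.DirectLimit

variable {R : Type*} [Semiring R] {ι κ : Type*} [Preorder ι] [Preorder κ]
  {G : κ → Type*} [∀ k, AddCommMonoid (G k)] [∀ k, Module R (G k)]
  (f : ∀ i j, i ≤ j → G i →ₗ[R] G j) [DirectedSystem G (f · · ·)]

theorem directedSystem_comp {u : ι → κ} (hu : Monotone u) :
    DirectedSystem (fun i ↦ G (u i)) (fun i j h ↦ f (u i) (u j) (hu h)) where
  map_self _ x := DirectedSystem.map_self' f x
  map_map _ _ _ _ _ x := DirectedSystem.map_map' f _ _ x

variable [DecidableEq ι] [DecidableEq κ]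

/-- The inverse comes from the lower adjoint `l`, using `k ≤ u (l k)` and `l (u i) ≤ i`. -/
noncomputable def reindexEquiv {l : κ → ι} {u : ι → κ} (gc : GaloisConnection l u) :
    DirectLimit (fun i ↦ G (u i)) (fun i j h ↦ f (u i) (u j) (gc.monotone_u h)) ≃ₗ[R]
      DirectLimit G f :=
  letI := directedSystem_comp f gc.monotone_u
  LinearEquiv.ofLinearMap
    (lift R ι _ _ (fun i ↦ of R κ G f (u i)) fun _ _ _ _ ↦ of_f)
    (lift R κ G f (fun k ↦ of R ι _ _ (l k) ∘ₗ f k (u (l k)) (gc.le_u_l k)) fun k k' h x ↦ by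
      simp only [LinearMap.comp_apply, DirectedSystem.map_map' f]
      rw [← of_f (hij := gc.monotone_l h), DirectedSystem.map_map' f])
    (by ext k x; simp [of_f])
    (by
      ext i x
      simp only [LinearMap.coe_comp, Function.comp_apply, lift_of, LinearMap.id_comp]
      rw [← of_f (hij := gc.l_u_le i), DirectedSystem.map_map' f, DirectedSystem.map_self' f])

end Module.DirectLimit

namespace Ordinal

theorem exists_galoisConnection_toType_mul {c : Ordinal} (hc : c ≠ 0) (o : Ordinal) :
    ∃ (l : o.ToType → (c * o).ToType) (u : (c * o).ToType → o.ToType), GaloisConnection l u := by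
  refine ⟨fun q ↦ ToType.mk ⟨c * ToType.mk.symm q,
      (mul_lt_mul_iff_right₀ (pos_iff_ne_zero.2 hc)).2 (ToType.mk.symm q).2⟩,
    fun i ↦ ToType.mk ⟨ToType.mk.symm i / c, (lt_mul_iff_div_lt hc).1 (ToType.mk.symm i).2⟩,
    fun q i ↦ ?_⟩
  obtain ⟨⟨a, -⟩, rfl⟩ := ToType.mk.surjective q
  obtain ⟨⟨b, -⟩, rfl⟩ := ToType.mk.surjective i
  simp only [OrderIso.symm_apply_apply, OrderIso.le_iff_le, Subtype.mk_le_mk]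
  exact mul_le_iff_le_div hc

end Ordinal

theorem stmt1_general
    {R : Type u} [Ring R]
    (𝒳 : ∀ (M : Type u) [AddCommGroup M] [Module R M], Prop)
    (hiso : ∀ (M N : Type u) [AddCommGroup M] [Module R M] [AddCommGroup N] [Module R N],
      (M ≃ₗ[R] N) → 𝒳 M → 𝒳 N)
    (κ : Cardinal.{u})
    (H : ∀ (o : Ordinal.{u}), κ ≤ o.card →
      ∀ (G : o.ToType → Type u) (_ : ∀ i, AddCommGroup (G i)) (_ : ∀ i, Module R (G i))
        (f : ∀ i j : o.ToType, i ≤ j → G i →ₗ[R] G j),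
        DirectedSystem G (fun i j h => f i j h) →
        (∀ i, 𝒳 (G i)) → 𝒳 (Module.DirectLimit G f)) :
    ∀ (o : Ordinal.{u}), o ≠ 0 →
      ∀ (G : o.ToType → Type u) (_ : ∀ i, AddCommGroup (G i)) (_ : ∀ i, Module R (G i))
        (f : ∀ i j : o.ToType, i ≤ j → G i →ₗ[R] G j),
        DirectedSystem G (fun i j h => f i j h) →
        (∀ i, 𝒳 (G i)) → 𝒳 (Module.DirectLimit G f) := by
  intro o ho G _ _ f _ hG
  set c := κ.ord + 1
  have hc : c ≠ 0 := (add_pos_of_right one_pos _).ne'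
  have hcard : κ ≤ (c * o).card :=
    calc κ ≤ c.card := by rw [Ordinal.card_add_one, Cardinal.card_ord]; exact le_self_add
      _ ≤ (c * o).card := Ordinal.card_le_card (Ordinal.le_mul_left c (pos_iff_ne_zero.2 ho))
  obtain ⟨l, u, gc⟩ := Ordinal.exists_galoisConnection_toType_mul hc o
  exact hiso _ _ (Module.DirectLimit.reindexEquiv f gc)
    (H _ hcard _ _ _ _ (Module.DirectLimit.directedSystem_comp f gc.monotone_u) fun i ↦ hG (u i))

/-- If a class of modules closed under isomorphism is closed under direct limits of
well-ordered systems indexed by ordinals of cardinality at least `κ` (for some infinite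
cardinal `κ`), then it is closed under all (nonempty) well-ordered direct limits. -/
theorem stmt1
    {R : Type u} [Ring R]
    (𝒳 : ∀ (M : Type u) [AddCommGroup M] [Module R M], Prop)
    (hiso : ∀ (M N : Type u) [AddCommGroup M] [Module R M] [AddCommGroup N] [Module R N],
      (M ≃ₗ[R] N) → 𝒳 M → 𝒳 N)
    (κ : Cardinal.{u}) (hκ : ℵ₀ ≤ κ)
    (H : ∀ (o : Ordinal.{u}), κ ≤ o.card →
      ∀ (G : o.ToType → Type u) (_ : ∀ i, AddCommGroup (G i)) (_ : ∀ i, Module R (G i))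
        (f : ∀ i j : o.ToType, i ≤ j → G i →ₗ[R] G j),
        DirectedSystem G (fun i j h => f i j h) →
        (∀ i, 𝒳 (G i)) → 𝒳 (Module.DirectLimit G f)) :
    ∀ (o : Ordinal.{u}), o ≠ 0 →
      ∀ (G : o.ToType → Type u) (_ : ∀ i, AddCommGroup (G i)) (_ : ∀ i, Module R (G i))
        (f : ∀ i j : o.ToType, i ≤ j → G i →ₗ[R] G j),
        DirectedSystem G (fun i j h => f i j h) →
        (∀ i, 𝒳 (G i)) → 𝒳 (Module.DirectLimit G f) :=
  stmt1_general 𝒳 hiso κ H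
end

section
/- Let κ be a regular cardinal and M a module which is a direct sum of κ-presented modules. Then every direct summand of M is a direct sum of κ-presented modules. -/
/-!
Kaplansky's argument. Let `π` be the projection of `M = ⨁ A i` onto `N` along a complement `N'`.
Since each `π (A i)` lies in the sum of at most `κ` of the `A j`, the indices are covered by sets
`W i ∋ i` of size at most `κ` such that for every union `T` of them, `M_T = ⨁_{j ∈ T} A j` is
`π`-invariant, hence `N ⊓ M_T` is a direct summand of `M`. Well-order the indices and let `Z i` be
the sum of the `M_{W j}` with `j ≤ i`. The chain `N ⊓ Z i` exhausts `N`, and a complement `Q i` of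
its earlier part `N ⊓ ⨆_{j<i} Z j` in `N ⊓ Z i` is an image of `M_{W i}`, so it is `κ`-generated;
the `Q i` decompose `N`. Finally a `κ`-generated summand `Q` of `M` lies in the sum of at most `κ`
of the `A i`, which is `κ`-presented, and `Q` is a retract of it, so `Q` is `κ`-presented.
-/

universe u v

open Cardinal Submodule Set

/-- A module is `κ`-generated if it has a generating set of cardinality at most `κ`. -/
def IsGenerated (κ : Cardinal.{u}) (R : Type u) [Ring R]
    (M : Type u) [AddCommGroup M] [Module R M] : Prop :=
  ∃ S : Set M, Cardinal.mk S ≤ κ ∧ Submodule.span R S = ⊤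

/-- A module is `κ`-presented if it is `κ`-generated and admits a free presentation
with `κ`-generated kernel. -/
def IsPresented (κ : Cardinal.{u}) (R : Type u) [Ring R]
    (M : Type u) [AddCommGroup M] [Module R M] : Prop :=
  IsGenerated κ R M ∧
    ∃ (ι : Type u) (f : (ι →₀ R) →ₗ[R] M), Function.Surjective f ∧
      IsGenerated κ R (LinearMap.ker f)

theorem Cardinal.mk_iUnion_le_of_le {α : Type u} {ι : Type v} {f : ι → Set α} {κ : Cardinal.{u}}
    (hκ : ℵ₀ ≤ κ) (hι : lift.{u} #ι ≤ lift.{v} κ) (hf : ∀ i, #(f i) ≤ κ) : #(⋃ i, f i) ≤ κ :=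
  lift_le.mp <| (mk_iUnion_le_lift f).trans <|
    mul_le_of_le (aleph0_le_lift.mpr hκ) hι (ciSup_le' fun i => lift_le.mpr (hf i))

theorem exists_superset_card_le_forall_subset {ι : Type u} {κ : Cardinal.{u}} (hκ : ℵ₀ ≤ κ)
    (D : ι → Set ι) (hD : ∀ i, #(D i) ≤ κ) {T : Set ι} (hT : #T ≤ κ) :
    ∃ W ⊇ T, (∀ i ∈ W, D i ⊆ W) ∧ #W ≤ κ := by
  let step : Set ι → Set ι := fun U => ⋃ i ∈ U, D i
  have hstep : ∀ n, #(step^[n] T) ≤ κ := by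
    intro n
    induction n with
    | zero => exact hT
    | succ n ih =>
      rw [Function.iterate_succ_apply']
      simp only [step, biUnion_eq_iUnion]
      exact mk_iUnion_le_of_le hκ (by simpa using ih) fun i => hD i
  refine ⟨⋃ n, step^[n] T, subset_iUnion (fun n => step^[n] T) 0, fun i hi => ?_,
    mk_iUnion_le_of_le hκ (by simpa using hκ) hstep⟩
  obtain ⟨n, hn⟩ := mem_iUnion.mp hi
  refine Subset.trans ?_ (subset_iUnion _ (n + 1))
  rw [Function.iterate_succ_apply']
  exact subset_biUnion_of_mem hn

section Lattice

variable {α : Type*} [CompleteLattice α] [IsModularLattice α]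

theorem isCompl_inf_sup_of_le_sup {a b c d : α} (hab : IsCompl a b) (hcd : IsCompl c d)
    (hc : c ≤ a ⊓ c ⊔ b ⊓ c) : IsCompl (a ⊓ c) (b ⊓ c ⊔ d) := by
  have hc' : c ⊓ (b ⊓ c ⊔ d) = b ⊓ c := by
    rw [sup_comm, ← inf_sup_assoc_of_le _ inf_le_right, hcd.inf_eq_bot, bot_sup_eq]
  constructor
  · refine disjoint_iff_inf_le.mpr ?_
    calc a ⊓ c ⊓ (b ⊓ c ⊔ d) = a ⊓ (b ⊓ c) := by rw [inf_assoc, hc']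
      _ ≤ a ⊓ b := inf_le_inf_left _ inf_le_left
      _ = ⊥ := hab.inf_eq_bot
  · refine codisjoint_iff_le_sup.mpr ?_
    calc ⊤ = c ⊔ d := hcd.sup_eq_top.symm
      _ ≤ a ⊓ c ⊔ b ⊓ c ⊔ d := sup_le_sup_right hc d
      _ = a ⊓ c ⊔ (b ⊓ c ⊔ d) := sup_assoc _ _ _

theorem iSupIndep.isCompl_biSup_compl [IsCompactlyGenerated α] {ι : Type*} {f : ι → α}
    (hf : iSupIndep f) (htop : ⨆ i, f i = ⊤) (s : Set ι) :
    IsCompl (⨆ i ∈ s, f i) (⨆ i ∈ sᶜ, f i) :=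
  ⟨hf.disjoint_biSup_biSup disjoint_compl_right,
    codisjoint_iff.mpr (by rw [← iSup_union, union_compl_self, iSup_univ, htop])⟩

theorem iSupIndep.isCompl_sup_of_isCompl_iSup {ι : Type*} {f : ι → α} (hf : iSupIndep f) {b : α}
    (hb : IsCompl (⨆ i, f i) b) (i : ι) : IsCompl (f i) ((⨆ (j) (_ : j ≠ i), f j) ⊔ b) :=
  ⟨(hf i).disjoint_sup_right_of_disjoint_sup_left (iSup_split_single f i ▸ hb.disjoint),
    codisjoint_iff.mpr (by rw [← sup_assoc, ← iSup_split_single, hb.sup_eq_top])⟩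

variable {ι : Type*} [LinearOrder ι] {X P : ι → α}

theorem iSupIndep_inf_of_disjoint [IsCompactlyGenerated α]
    (hP : ∀ i, Disjoint (⨆ j < i, X j) (P i)) : iSupIndep fun i => X i ⊓ P i := by
  classical
  rw [iSupIndep_iff_supIndep]
  intro s
  induction s using Finset.induction_on_max with
  | empty => exact Finset.supIndep_empty _
  | insert a s has ih =>
    refine ih.insert ((hP a).symm.mono inf_le_right ?_)
    exact Finset.sup_le fun j hj => inf_le_left.trans (le_biSup X (has j hj))

theorem inf_sup_biSup_lt_eq (hX : Monotone X) (hP : ∀ i, Codisjoint (⨆ j < i, X j) (P i))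
    (i : ι) : X i ⊓ P i ⊔ ⨆ j < i, X j = X i := by
  rw [inf_sup_assoc_of_le _ (iSup₂_le fun j hj => hX hj.le), sup_comm, (hP i).eq_top, inf_top_eq]

theorem iSup_inf_eq_of_codisjoint [WellFoundedLT ι] (hX : Monotone X)
    (hP : ∀ i, Codisjoint (⨆ j < i, X j) (P i)) : ⨆ i, X i ⊓ P i = ⨆ i, X i := by
  refine le_antisymm (iSup_mono fun i => inf_le_left) (iSup_le fun i => ?_)
  induction i using WellFoundedLT.induction with
  | _ i ih =>
    rw [← inf_sup_biSup_lt_eq hX hP i]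
    exact sup_le (le_iSup (fun i => X i ⊓ P i) i) (iSup₂_le fun j hj => ih j hj)

end Lattice

namespace Submodule

section SpanRank

variable {R : Type*} [Semiring R] {M : Type u} [AddCommMonoid M] [Module R M] {κ : Cardinal.{u}}

theorem spanRank_iSup_le {ι : Type u} (hκ : ℵ₀ ≤ κ) (hι : #ι ≤ κ) {p : ι → Submodule R M}
    (hp : ∀ i, (p i).spanRank ≤ κ) : (⨆ i, p i).spanRank ≤ κ := by
  have hspan : ⨆ i, p i = span R (⋃ i, (p i).generators) := by
    simp only [span_iUnion, span_generators]
  rw [hspan]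
  exact (spanRank_span_le_card _).trans <|
    mk_iUnion_le_of_le hκ (by simpa using hι) fun i => (generators_card _).trans_le (hp i)

theorem spanRank_biSup_le {ι : Type u} (hκ : ℵ₀ ≤ κ) {s : Set ι} (hs : #s ≤ κ)
    {p : ι → Submodule R M} (hp : ∀ i ∈ s, (p i).spanRank ≤ κ) :
    (⨆ i ∈ s, p i).spanRank ≤ κ := by
  rw [iSup_subtype']
  exact spanRank_iSup_le hκ hs fun i => hp i i.2

theorem exists_card_le_and_le_biSup {ι : Type u} (hκ : ℵ₀ ≤ κ) {A : ι → Submodule R M}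
    (hA : ⨆ i, A i = ⊤) {p : Submodule R M} (hp : p.spanRank ≤ κ) :
    ∃ s : Set ι, #s ≤ κ ∧ p ≤ ⨆ i ∈ s, A i := by
  choose F hF using fun x : M => mem_iSup_iff_exists_finset.mp (hA ▸ mem_top (x := x))
  refine ⟨⋃ x : p.generators, (F x : Set ι), mk_iUnion_le_of_le hκ ?_ fun x => ?_, ?_⟩
  · simpa [generators_card] using hp
  · exact (mk_coe_finset.trans_lt (natCast_lt_aleph0)).le.trans hκ
  · refine (span_generators p).ge.trans (span_le.mpr fun x hx => ?_)
    have hFx : ⨆ i ∈ F x, A i ≤ ⨆ i ∈ ⋃ x : p.generators, (F x : Set ι), A i :=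
      biSup_mono fun i hi => mem_iUnion.mpr ⟨⟨x, hx⟩, hi⟩
    exact hFx (hF x)

end SpanRank

section SpanRankRing

variable {R : Type*} [Ring R] {M M' : Type u} [AddCommGroup M] [Module R M]
  [AddCommGroup M'] [Module R M']

theorem spanRank_le_spanRank_inf_ker_add_spanRank_map (f : M →ₗ[R] M') (p : Submodule R M) :
    p.spanRank ≤ (p ⊓ LinearMap.ker f).spanRank + (p.map f).spanRank := by
  obtain ⟨t, htp, hbij⟩ : ∃ t ⊆ (p : Set M), BijOn f t (p.map f).generators :=
    surjOn_iff_exists_bijOn_subset.mp fun y hy => by simpa using FG.generators_mem _ hy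
  have hmap : (span R t).map f = p.map f := by
    rw [map_span, hbij.image_eq, span_generators]
  have hp : p = p ⊓ LinearMap.ker f ⊔ span R t := by
    refine le_antisymm ?_ (sup_le inf_le_left (span_le.mpr htp))
    rw [inf_sup_assoc_of_le _ (span_le.mpr htp), sup_comm, ← comap_map_eq, hmap]
    exact le_inf le_rfl (le_comap_map f p)
  calc p.spanRank = (p ⊓ LinearMap.ker f ⊔ span R t).spanRank := by rw [← hp]
    _ ≤ (p ⊓ LinearMap.ker f).spanRank + #t :=
      spanRank_sup_le_sum_spanRank.trans (add_le_add le_rfl (spanRank_span_le_card t))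
    _ = (p ⊓ LinearMap.ker f).spanRank + (p.map f).spanRank := by
      rw [← (p.map f).generators_card, ← hbij.image_eq, mk_image_eq_of_injOn _ _ hbij.injOn]

theorem spanRank_le_of_isCompl_of_sup_eq {Y P Q Z : Submodule R M} (hYP : IsCompl Y P)
    (hQP : Q ≤ P) (hQZ : Q ⊔ Y = Z ⊔ Y) : Q.spanRank ≤ Z.spanRank := by
  let σ := P.projection Y hYP.symm
  have hσY : ∀ L : Submodule R M, (L ⊔ Y).map σ = L.map σ := fun L => by
    rw [map_sup, (LinearMap.le_ker_iff_map).mp (ker_projection hYP.symm).ge, sup_bot_eq]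
  have hσQ : Q.map σ = Q := by
    ext x
    refine ⟨?_, fun hx => ⟨x, hx, projection_apply_of_mem_left _ (hQP hx)⟩⟩
    rintro ⟨y, hy, rfl⟩
    rwa [projection_apply_of_mem_left _ (hQP hy)]
  calc Q.spanRank = (Z.map σ).spanRank := by rw [← hσY, ← hQZ, hσY, hσQ]
    _ ≤ Z.spanRank := spanRank_map_le _ _

end SpanRankRing

section Projection

variable {R : Type*} [Ring R] {M : Type*} [AddCommGroup M] [Module R M]
  {N N' L : Submodule R M}

theorem map_projection_eq_inf (hN : IsCompl N N') (hL : L.map (N.projection N' hN) ≤ L) :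
    L.map (N.projection N' hN) = N ⊓ L :=
  le_antisymm (le_inf (LinearMap.map_le_range.trans (range_projection hN).le) hL)
    fun x hx => ⟨x, hx.2, projection_apply_of_mem_left hN hx.1⟩

theorem le_inf_sup_inf_of_map_projection_le (hN : IsCompl N N')
    (hL : L.map (N.projection N' hN) ≤ L) : L ≤ N ⊓ L ⊔ N' ⊓ L := fun x hx =>
  mem_sup.mpr ⟨_, ⟨projection_apply_mem hN x, hL ⟨x, hx, rfl⟩⟩, _,
    ⟨sub_projection_mem hN x, sub_mem hx (hL ⟨x, hx, rfl⟩)⟩, add_sub_cancel _ _⟩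

theorem map_biSup_le_biSup {ι : Type*} {A : ι → Submodule R M} {D : ι → Set ι} (f : M →ₗ[R] M)
    (hD : ∀ i, (A i).map f ≤ ⨆ j ∈ D i, A j) {s : Set ι} (hs : ∀ i ∈ s, D i ⊆ s) :
    (⨆ i ∈ s, A i).map f ≤ ⨆ i ∈ s, A i := by
  simp only [map_iSup]
  exact iSup₂_le fun i hi => (hD i).trans (biSup_mono (hs i hi))

end Projection

end Submodule

section Presented

variable {R : Type u} [Ring R] {M M' : Type u} [AddCommGroup M] [Module R M]
  [AddCommGroup M'] [Module R M'] {κ : Cardinal.{u}}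

theorem isGenerated_iff_spanRank_le : IsGenerated κ R M ↔ (⊤ : Submodule R M).spanRank ≤ κ :=
  (FG.spanRank_le_iff_exists_span_set_card_le ⊤).symm

theorem isPresented_iff_spanRank_le : IsPresented κ R M ↔ (⊤ : Submodule R M).spanRank ≤ κ ∧
    ∃ (ι : Type u) (f : (ι →₀ R) →ₗ[R] M), Function.Surjective f ∧
      (LinearMap.ker f).spanRank ≤ κ := by
  simp only [IsPresented, isGenerated_iff_spanRank_le, spanRank_top]

theorem IsPresented.of_linearEquiv (e : M ≃ₗ[R] M') (hM : IsPresented κ R M) :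
    IsPresented κ R M' := by
  rw [isPresented_iff_spanRank_le] at hM ⊢
  obtain ⟨hgen, ι, f, hf, hker⟩ := hM
  refine ⟨(spanRank_eq_of_equiv e).symm.trans_le hgen, ι, e.toLinearMap ∘ₗ f,
    e.surjective.comp hf, ?_⟩
  rwa [LinearEquiv.ker_comp]

theorem IsPresented.of_surjective (hκ : ℵ₀ ≤ κ) (hM : IsPresented κ R M) (g : M →ₗ[R] M')
    (hg : Function.Surjective g) (hker : (LinearMap.ker g).spanRank ≤ κ) :
    IsPresented κ R M' := by
  rw [isPresented_iff_spanRank_le] at hM ⊢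
  obtain ⟨hgen, ι, f, hf, hfker⟩ := hM
  refine ⟨?_, ι, g ∘ₗ f, hg.comp hf, ?_⟩
  · rw [← LinearMap.range_eq_top.mpr hg]
    exact (spanRank_range_le g).trans hgen
  · have h := spanRank_le_spanRank_inf_ker_add_spanRank_map f (LinearMap.ker (g ∘ₗ f))
    rw [inf_eq_right.mpr (LinearMap.ker_le_ker_comp f g), LinearMap.ker_comp,
      map_comap_eq_of_surjective hf] at h
    exact h.trans ((add_le_add hfker hker).trans (add_eq_self hκ).le)

theorem IsPresented.of_comp_eq_id (hκ : ℵ₀ ≤ κ) (hM : IsPresented κ R M) (g : M →ₗ[R] M')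
    (s : M' →ₗ[R] M) (hgs : g ∘ₗ s = LinearMap.id) : IsPresented κ R M' := by
  have hker : LinearMap.ker g = LinearMap.range (LinearMap.id - s ∘ₗ g) := by
    ext x
    constructor
    · intro hx
      exact ⟨x, by simp [LinearMap.mem_ker.mp hx]⟩
    · rintro ⟨y, rfl⟩
      simp [← LinearMap.comp_apply g s, hgs]
  refine hM.of_surjective hκ g (fun y => ⟨s y, LinearMap.congr_fun hgs y⟩) ?_
  rw [hker]
  exact (spanRank_range_le _).trans (isPresented_iff_spanRank_le.mp hM).1

theorem IsPresented.of_le_of_isCompl (hκ : ℵ₀ ≤ κ) {P Q C : Submodule R M}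
    (hP : IsPresented κ R P) (hQP : Q ≤ P) (hQC : IsCompl Q C) : IsPresented κ R Q :=
  hP.of_comp_eq_id hκ (Q.projectionOnto C hQC ∘ₗ P.subtype) (inclusion hQP)
    (LinearMap.ext fun x => by simp)

theorem spanRank_top_dfinsupp_le {S : Type u} (hκ : ℵ₀ ≤ κ) (hS : #S ≤ κ) {N : S → Type u}
    [∀ i, AddCommMonoid (N i)] [∀ i, Module R (N i)]
    (h : ∀ i, (⊤ : Submodule R (N i)).spanRank ≤ κ) :
    (⊤ : Submodule R (Π₀ i, N i)).spanRank ≤ κ := by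
  classical
  rw [← DFinsupp.iSup_range_lsingle]
  exact spanRank_iSup_le hκ hS fun i => (spanRank_range_le (DFinsupp.lsingle i)).trans (h i)

theorem IsPresented.dfinsupp {S : Type u} (hκ : ℵ₀ ≤ κ) (hS : #S ≤ κ) {N : S → Type u}
    [∀ i, AddCommGroup (N i)] [∀ i, Module R (N i)] (h : ∀ i, IsPresented κ R (N i)) :
    IsPresented κ R (Π₀ i, N i) := by
  simp only [isPresented_iff_spanRank_le] at h ⊢
  choose hgen ιf f hf hker using h
  let e := sigmaFinsuppLequivDFinsupp (η := ιf) R (N := R)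
  refine ⟨spanRank_top_dfinsupp_le hκ hS hgen, Σ i, ιf i,
    DFinsupp.mapRange.linearMap f ∘ₗ e.toLinearMap,
    ((DFinsupp.mapRange_surjective _ fun i => (f i).map_zero).mpr hf).comp e.surjective, ?_⟩
  have hkerf : LinearMap.ker (DFinsupp.mapRange.linearMap f) =
      LinearMap.range (DFinsupp.mapRange.linearMap fun i => (LinearMap.ker (f i)).subtype) := by
    simp only [DFinsupp.ker_mapRangeLinearMap, DFinsupp.range_mapRangeLinearMap, range_subtype]
  rw [LinearMap.ker_comp, hkerf, comap_equiv_eq_map_symm]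
  refine (spanRank_map_le _ _).trans <| (spanRank_range_le _).trans ?_
  exact spanRank_top_dfinsupp_le hκ hS fun i => (spanRank_top _).trans_le (hker i)

theorem IsPresented.iSup {S : Type u} (hκ : ℵ₀ ≤ κ) (hS : #S ≤ κ) {A : S → Submodule R M}
    (hA : iSupIndep A) (h : ∀ i, IsPresented κ R (A i)) : IsPresented κ R ↥(⨆ i, A i) := by
  classical
  refine (IsPresented.dfinsupp hκ hS h).of_linearEquiv <|
    (LinearEquiv.ofInjective _ hA.dfinsupp_lsum_injective).trans (LinearEquiv.ofEq _ _ ?_)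
  exact (iSup_eq_range_dfinsupp_lsum A).symm

end Presented

section Kaplansky

variable {R : Type*} [Ring R] {M : Type u} [AddCommGroup M] [Module R M] {κ : Cardinal.{u}}

theorem exists_iSupIndep_spanRank_le_of_map_projection_le {ι : Type*} {V : ι → Submodule R M}
    (hV : ⨆ i, V i = ⊤) (hVκ : ∀ i, (V i).spanRank ≤ κ) {N N' : Submodule R M}
    (hN : IsCompl N N') (hinv : ∀ s : Set ι, (⨆ i ∈ s, V i).map (N.projection N' hN) ≤ ⨆ i ∈ s, V i)
    (hcompl : ∀ s : Set ι, ∃ C, IsCompl (⨆ i ∈ s, V i) C) :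
    ∃ Q : ι → Submodule R M, iSupIndep Q ∧ ⨆ i, Q i = N ∧ ∀ i, (Q i).spanRank ≤ κ := by
  obtain ⟨_, _⟩ := exists_wellFoundedLT ι
  let Z : ι → Submodule R M := fun i => ⨆ j ≤ i, V j
  have hZ : Monotone Z := fun i i' h => biSup_mono fun j hj => hj.trans h
  have hZinv : ∀ i, (Z i).map (N.projection N' hN) ≤ Z i := fun i => hinv (Iic i)
  have hYinv : ∀ i, (⨆ j < i, V j).map (N.projection N' hN) ≤ ⨆ j < i, V j :=
    fun i => hinv (Iio i)
  have hZlt : ∀ i, ⨆ j < i, Z j = ⨆ j < i, V j := fun i =>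
    le_antisymm (iSup₂_le fun j hj => iSup₂_le fun k hk => le_biSup V (hk.trans_lt hj))
      (iSup₂_mono fun j _ => le_biSup V le_rfl)
  have hXlt : ∀ i, ⨆ j < i, N ⊓ Z j = N ⊓ ⨆ j < i, V j := fun i => by
    rw [← hZlt, iSup_subtype', iSup_subtype']
    exact ((hZ.comp (Subtype.mono_coe (· < i))).directed_le.inf_iSup_eq).symm
  have hYcompl : ∀ i, ∃ C, IsCompl (⨆ j < i, V j) C := fun i => hcompl (Iio i)
  choose C hC using hYcompl
  let P : ι → Submodule R M := fun i => N' ⊓ (⨆ j < i, V j) ⊔ C i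
  have hP : ∀ i, IsCompl (⨆ j < i, N ⊓ Z j) (P i) := fun i => by
    rw [hXlt]
    exact isCompl_inf_sup_of_le_sup hN (hC i) (le_inf_sup_inf_of_map_projection_le hN (hYinv i))
  have hX : Monotone fun i => N ⊓ Z i := fun i i' h => inf_le_inf_left N (hZ h)
  refine ⟨fun i => N ⊓ Z i ⊓ P i,
    iSupIndep_inf_of_disjoint fun i => (hP i).disjoint, ?_, fun i => ?_⟩
  · have hZtop : ⨆ i, Z i = ⊤ := eq_top_iff.mpr (hV ▸ iSup_mono fun i => le_biSup V le_rfl)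
    rw [iSup_inf_eq_of_codisjoint hX fun i => (hP i).codisjoint, ← hZ.directed_le.inf_iSup_eq,
      hZtop, inf_top_eq]
  · refine (spanRank_le_of_isCompl_of_sup_eq (hP i) inf_le_right
      (Z := (V i).map (N.projection N' hN)) ?_).trans ((spanRank_map_le _ _).trans (hVκ i))
    rw [inf_sup_biSup_lt_eq hX (fun i => (hP i).codisjoint), hXlt,
      ← map_projection_eq_inf hN (hZinv i), ← map_projection_eq_inf hN (hYinv i),
      show Z i = _ from biSup_le_eq_sup V i, Submodule.map_sup, sup_comm]

end Kaplansky

namespace DirectSum.IsInternal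

variable {R : Type u} [Ring R] {M : Type u} [AddCommGroup M] [Module R M] {κ : Cardinal.{u}}
  {ι : Type u} [DecidableEq ι] {A : ι → Submodule R M}

theorem exists_invariant_spanRank_le (hκ : ℵ₀ ≤ κ) (hA : IsInternal A)
    (hAκ : ∀ i, (A i).spanRank ≤ κ) (f : M →ₗ[R] M) :
    ∃ V : ι → Submodule R M, ⨆ i, V i = ⊤ ∧ (∀ i, (V i).spanRank ≤ κ) ∧
      (∀ s : Set ι, (⨆ i ∈ s, V i).map f ≤ ⨆ i ∈ s, V i) ∧
      ∀ s : Set ι, ∃ C, IsCompl (⨆ i ∈ s, V i) C := by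
  choose D hDκ hD using fun i => exists_card_le_and_le_biSup hκ hA.submodule_iSup_eq_top
    ((spanRank_map_le f (A i)).trans (hAκ i))
  choose W hiW hWD hWκ using fun i => exists_superset_card_le_forall_subset hκ D hDκ (T := {i})
    (by simpa using one_le_aleph0.trans hκ)
  have hbiSup : ∀ s : Set ι, ⨆ i ∈ s, ⨆ j ∈ W i, A j = ⨆ j ∈ ⋃ i ∈ s, W i, A j := fun s => by
    simp only [iSup_iUnion]
  refine ⟨fun i => ⨆ j ∈ W i, A j, ?_, fun i => spanRank_biSup_le hκ (hWκ i) fun j _ => hAκ j,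
    fun s => ?_, fun s => ?_⟩
  · rw [eq_top_iff, ← hA.submodule_iSup_eq_top]
    exact iSup_mono fun i => le_biSup A (hiW i rfl)
  · rw [hbiSup]
    refine map_biSup_le_biSup f hD fun j hj => ?_
    obtain ⟨i, hi, hji⟩ := mem_iUnion₂.mp hj
    exact (hWD i j hji).trans (subset_biUnion_of_mem hi)
  · rw [hbiSup]
    exact ⟨_, hA.submodule_iSupIndep.isCompl_biSup_compl hA.submodule_iSup_eq_top _⟩

theorem exists_iSupIndep_spanRank_le (hκ : ℵ₀ ≤ κ) (hA : IsInternal A)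
    (hAκ : ∀ i, (A i).spanRank ≤ κ) {N N' : Submodule R M} (hN : IsCompl N N') :
    ∃ Q : ι → Submodule R M, iSupIndep Q ∧ ⨆ i, Q i = N ∧ ∀ i, (Q i).spanRank ≤ κ := by
  obtain ⟨V, hV, hVκ, hinv, hcompl⟩ := hA.exists_invariant_spanRank_le hκ hAκ (N.projection N' hN)
  exact exists_iSupIndep_spanRank_le_of_map_projection_le hV hVκ hN hinv hcompl

theorem isPresented_of_isCompl (hκ : ℵ₀ ≤ κ) (hA : IsInternal A)
    (h : ∀ i, IsPresented κ R (A i)) {Q C : Submodule R M} (hQC : IsCompl Q C)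
    (hQ : Q.spanRank ≤ κ) : IsPresented κ R Q := by
  obtain ⟨s, hs, hQs⟩ := exists_card_le_and_le_biSup hκ hA.submodule_iSup_eq_top hQ
  have hP : IsPresented κ R ↥(⨆ i : s, A i) :=
    IsPresented.iSup hκ hs (hA.submodule_iSupIndep.comp Subtype.val_injective) fun i => h i
  exact hP.of_le_of_isCompl hκ (hQs.trans_eq iSup_subtype') hQC

end DirectSum.IsInternal

theorem DirectSum.isInternal_comap_subtype_of_iSupIndep {R : Type*} [Ring R] {M : Type*}
    [AddCommGroup M] [Module R M] {ι : Type*} [DecidableEq ι] {Q : ι → Submodule R M}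
    {N : Submodule R M} (hQ : iSupIndep Q) (hQN : ⨆ i, Q i = N) :
    DirectSum.IsInternal fun i => (Q i).comap N.subtype := by
  have hle : ∀ i, Q i ≤ N := fun i => hQN ▸ le_iSup Q i
  refine (DirectSum.isInternal_submodule_iff_iSupIndep_and_iSup_eq_top _).mpr ⟨?_, ?_⟩
  · suffices (N.mapIic ∘ fun i => (Q i).comap N.subtype) = fun i => ⟨Q i, hle i⟩ by
      rw [← iSupIndep_map_orderIso_iff N.mapIic, this]
      exact .of_coe_Iic_comp hQ
    ext i : 2
    simp [map_comap_subtype, inf_of_le_right (hle i)]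
  · refine map_injective_of_injective N.injective_subtype ?_
    simp [Submodule.map_iSup, map_comap_subtype, inf_of_le_right (hle _), hQN]

/-- Walker's theorem for `κ`-presented modules: every direct summand of a direct sum of
`κ`-presented modules is a direct sum of `κ`-presented modules. -/
theorem stmt3
    {R : Type u} [Ring R] {M : Type u} [AddCommGroup M] [Module R M]
    (κ : Cardinal.{u}) (hκ : κ.IsRegular)
    {ι : Type u} [DecidableEq ι] (A : ι → Submodule R M)
    (hint : DirectSum.IsInternal A)
    (hpres : ∀ i, IsPresented κ R (A i))
    (N : Submodule R M) (hN : ∃ N' : Submodule R M, IsCompl N N') :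
    ∃ (ι' : Type u) (_ : DecidableEq ι') (B : ι' → Submodule R N),
      DirectSum.IsInternal B ∧ ∀ j, IsPresented κ R (B j) := by
  obtain ⟨N', hNN'⟩ := hN
  have hAκ : ∀ i, (A i).spanRank ≤ κ := fun i => by
    simpa [isGenerated_iff_spanRank_le] using (hpres i).1
  obtain ⟨Q, hQ, hQN, hQκ⟩ := hint.exists_iSupIndep_spanRank_le hκ.aleph0_le hAκ hNN'
  have hQle : ∀ i, Q i ≤ N := fun i => hQN ▸ le_iSup Q i
  refine ⟨ι, inferInstance, _, DirectSum.isInternal_comap_subtype_of_iSupIndep hQ hQN, fun i => ?_⟩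
  have hcompl := hQ.isCompl_sup_of_isCompl_iSup (hQN ▸ hNN') i
  exact (hint.isPresented_of_isCompl hκ.aleph0_le hpres hcompl (hQκ i)).of_linearEquiv
    (comapSubtypeEquivOfLe (hQle i)).symm
end

section
/- Let κ be an uncountable regular cardinal, X a module, and M a module admitting a κ-filtration ⟨M_α | α < κ⟩ with M_{α+1} ∈ Add(X) for each α < κ. Then M is (κ, Add(X))-free in the weak sense: there is a directed system S of submodules of M, all belonging to Add(X), such that every subset of M of cardinality < κ is contained in a member of S. -/
/-!
Take the successor members `M_{α+1}`, `α < κ`: they lie in `Add(X)` and form a chain. A set `Y`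
of size `< κ` meets the filtration in members `M_{α_y}`, `y ∈ Y`, and by regularity of `κ` the
supremum of the `α_y` is still below `κ`, so `Y` lies in a single successor member.
-/

/-- `N` belongs to `Add(X)`: it is isomorphic to a direct summand of a direct sum of
copies of `X`. -/
def InAdd (R : Type u) [Ring R] (X : Type u) [AddCommGroup X] [Module R X]
    (N : Type u) [AddCommGroup N] [Module R N] : Prop :=
  ∃ (ι : Type u) (f : N →ₗ[R] (ι →₀ X)) (g : (ι →₀ X) →ₗ[R] N),
    g.comp f = LinearMap.id

theorem MonotoneOn.directedOn_image {α β : Type*} [LinearOrder α] [Preorder β] {f : α → β}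
    {s : Set α} (hf : MonotoneOn f s) : DirectedOn (· ≤ ·) (f '' s) :=
  _root_.directedOn_image.2 fun a ha b hb => by
    rcases le_total a b with hab | hba
    · exact ⟨b, hb, hf ha hb hab, le_rfl⟩
    · exact ⟨a, ha, le_rfl, hf hb ha hba⟩

theorem Submodule.exists_lt_subset_of_mk_lt_cof {R : Type*} {M : Type u} [Ring R] [AddCommGroup M]
    [Module R M] {o : Ordinal.{u}} {F : Ordinal.{u} → Submodule R M}
    (hF : MonotoneOn F (Set.Iio o)) (htop : ⨆ α : Set.Iio o, F α = ⊤) {Y : Set M}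
    (hY : Cardinal.mk Y < o.cof) : ∃ α < o, Y ⊆ F α := by
  have ho : 0 < o := Ordinal.cof_pos.1 (hY.trans_le' zero_le)
  have : Nonempty (Set.Iio o) := ⟨⟨0, ho⟩⟩
  have hdir : Directed (· ≤ ·) fun α : Set.Iio o => F α :=
    Monotone.directed_le fun α β hαβ => hF α.2 β.2 hαβ
  have hmem (y : Y) : ∃ α : Set.Iio o, (y : M) ∈ F α :=
    (mem_iSup_of_directed _ hdir).1 (htop ▸ mem_top)
  choose f hf using hmem
  have hsup : ⨆ y, (f y : Ordinal) < o := Ordinal.iSup_lt_of_lt_cof hY fun y => (f y).2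
  exact ⟨_, hsup, fun y hy =>
    hF (f ⟨y, hy⟩).2 hsup (Ordinal.le_iSup (fun y => (f y : Ordinal)) _) (hf ⟨y, hy⟩)⟩

theorem stmt5_general
    {R : Type u} [Ring R] {M : Type u} [AddCommGroup M] [Module R M]
    (X : Type u) [AddCommGroup X] [Module R X]
    (κ : Cardinal.{u}) (hκ : κ.IsRegular)
    (Mfil : Ordinal.{u} → Submodule R M)
    (hmono : ∀ α β : Ordinal.{u}, α ≤ β → β < κ.ord → Mfil α ≤ Mfil β)
    (hunion : ⨆ α : Set.Iio κ.ord, Mfil α.1 = ⊤)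
    (hadd : ∀ α < κ.ord, InAdd R X (Mfil (α + 1))) :
    ∃ 𝒮 : Set (Submodule R M), DirectedOn (· ≤ ·) 𝒮 ∧
      (∀ P ∈ 𝒮, InAdd R X P) ∧
      (∀ Y : Set M, Cardinal.mk Y < κ → ∃ P ∈ 𝒮, Y ⊆ (P : Set M)) := by
  have hF : MonotoneOn Mfil (Set.Iio κ.ord) := fun α _ β hβ hαβ => hmono α β hαβ hβ
  have hsucc (α : Ordinal) (hα : α < κ.ord) : α + 1 < κ.ord := by
    simpa only [Order.succ_eq_add_one] using
      (Cardinal.isSuccLimit_ord hκ.aleph0_le).succ_lt hα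
  have hFsucc : MonotoneOn (fun α => Mfil (α + 1)) (Set.Iio κ.ord) := fun α hα β hβ hαβ =>
    hF (hsucc α hα) (hsucc β hβ) (add_le_add_left hαβ 1)
  refine ⟨(fun α => Mfil (α + 1)) '' Set.Iio κ.ord, hFsucc.directedOn_image, ?_, ?_⟩
  · rintro _ ⟨α, hα, rfl⟩
    exact hadd α hα
  · intro Y hY
    obtain ⟨α, hα, hYα⟩ :=
      Submodule.exists_lt_subset_of_mk_lt_cof hF hunion (hκ.cof_ord.symm ▸ hY)
    exact ⟨_, ⟨α, hα, rfl⟩, hYα.trans (hF hα (hsucc α hα) le_self_add)⟩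

/-- If `M` admits a `κ`-filtration whose successor members belong to `Add(X)`, then `M`
is `(κ, Add(X))`-free in the weak sense. -/
theorem stmt5
    {R : Type u} [Ring R] {M : Type u} [AddCommGroup M] [Module R M]
    (X : Type u) [AddCommGroup X] [Module R X]
    (κ : Cardinal.{u}) (hκ : κ.IsRegular) (hunc : ℵ₀ < κ)
    (Mfil : Ordinal.{u} → Submodule R M)
    (hmono : ∀ α β : Ordinal.{u}, α ≤ β → β < κ.ord → Mfil α ≤ Mfil β)
    (hlim : ∀ α : Ordinal.{u}, α < κ.ord → Order.IsSuccLimit α → Mfil α = ⨆ β < α, Mfil β)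
    (hunion : ⨆ α : Set.Iio κ.ord, Mfil α.1 = ⊤)
    (hgen : ∀ α < κ.ord, ∃ S : Set M, Cardinal.mk S < κ ∧ Submodule.span R S = Mfil α)
    (hadd : ∀ α < κ.ord, InAdd R X (Mfil (α + 1))) :
    ∃ 𝒮 : Set (Submodule R M), DirectedOn (· ≤ ·) 𝒮 ∧
      (∀ P ∈ 𝒮, InAdd R X P) ∧
      (∀ Y : Set M, Cardinal.mk Y < κ → ∃ P ∈ 𝒮, Y ⊆ (P : Set M)) :=
  stmt5_general X κ hκ Mfil hmono hunion hadd
end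

section
/- Let κ be an uncountable regular cardinal and M a module admitting a κ-filtration ⟨M_α | α < κ⟩ such that each M_{α+1} lies in Add(X) and the set E = {α < κ : M_α is not a direct summand of M} is non-stationary in κ. Then M ∈ Add(X). -/
/-- `C` is a club in the limit ordinal `o`. -/
def IsClubIn (C : Set Ordinal.{u}) (o : Ordinal.{u}) : Prop :=
  C ⊆ Set.Iio o ∧
  (∀ A : Set Ordinal.{u}, A ⊆ C → A.Nonempty → sSup A < o → sSup A ∈ C) ∧
  (∀ α < o, ∃ β ∈ C, α ≤ β)

/-- `S` is stationary in `o`: it meets every club in `o`. -/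
def IsStationaryIn (S : Set Ordinal.{u}) (o : Ordinal.{u}) : Prop :=
  ∀ C : Set Ordinal.{u}, IsClubIn C o → (S ∩ C).Nonempty

open Order Set

namespace InAdd

variable {R : Type u} [Ring R] {X : Type u} [AddCommGroup X] [Module R X]
  {M N : Type u} [AddCommGroup M] [Module R M] [AddCommGroup N] [Module R N]

theorem of_retract (h : InAdd R X N) (f : M →ₗ[R] N) (g : N →ₗ[R] M)
    (hgf : g.comp f = LinearMap.id) : InAdd R X M := by
  obtain ⟨ι, F, G, hGF⟩ := h
  refine ⟨ι, F ∘ₗ f, g ∘ₗ G, ?_⟩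
  calc g ∘ₗ G ∘ₗ F ∘ₗ f = g ∘ₗ (G ∘ₗ F) ∘ₗ f := rfl
    _ = LinearMap.id := by rw [hGF, LinearMap.id_comp, hgf]

theorem of_isCompl_of_le {P Q W : Submodule R M} (hW : InAdd R X W) (hPQ : IsCompl P Q)
    (hPW : P ≤ W) : InAdd R X P :=
  hW.of_retract (Submodule.inclusion hPW) ((P.projectionOnto Q hPQ).comp W.subtype) <|
    LinearMap.ext fun x => Submodule.projectionOnto_apply_left hPQ x

theorem dfinsupp {ι : Type u} {A : ι → Type u} [∀ i, AddCommGroup (A i)]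
    [∀ i, Module R (A i)] (h : ∀ i, InAdd R X (A i)) : InAdd R X (Π₀ i, A i) := by
  choose κ f g hgf using h
  refine ⟨Σ i, κ i,
    (sigmaFinsuppLequivDFinsupp R).symm.toLinearMap ∘ₗ DFinsupp.mapRange.linearMap f,
    DFinsupp.mapRange.linearMap g ∘ₗ (sigmaFinsuppLequivDFinsupp R).toLinearMap, ?_⟩
  ext x i : 2
  simpa using LinearMap.congr_fun (hgf i) (x i)

theorem of_sSupIndep {S : Set (Submodule R M)} (hS : sSupIndep S) (htop : sSup S = ⊤)
    (h : ∀ P ∈ S, InAdd R X P) : InAdd R X M := by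
  classical
  have hint : DirectSum.IsInternal fun P : S => (P : Submodule R M) :=
    DirectSum.isInternal_submodule_of_iSupIndep_of_iSup_eq_top ((sSupIndep_iff S).1 hS)
      (by rwa [← sSup_eq_iSup'])
  let e := LinearEquiv.ofBijective (DirectSum.coeLinearMap _) hint
  exact (dfinsupp fun P : S => h P P.2).of_retract e.symm.toLinearMap e.toLinearMap
    e.comp_symm

end InAdd

theorem iSupIndep_of_disjoint_iSup_lt {L ι : Type*} [CompleteLattice L] [IsModularLattice L]
    [IsCompactlyGenerated L] [LinearOrder ι] {f : ι → L}
    (h : ∀ i, Disjoint (f i) (⨆ j < i, f j)) : iSupIndep f := by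
  classical
  refine iSupIndep_iff_supIndep.2 fun s => ?_
  induction s using Finset.induction_on_max with
  | empty => exact Finset.supIndep_empty f
  | insert i s hlt ih =>
    exact ih.insert <| (h i).mono_right <| Finset.sup_le fun j hj => le_biSup f (hlt j hj)

noncomputable def nextIn (C : Set Ordinal.{u}) (c : Ordinal.{u}) : Ordinal.{u} :=
  sInf (C ∩ Ioi c)

section Club

variable {C : Set Ordinal.{u}} {o c d : Ordinal.{u}}

theorem nextIn_mem (h : (C ∩ Ioi c).Nonempty) : nextIn C c ∈ C :=
  (csInf_mem h).1

theorem lt_nextIn (h : (C ∩ Ioi c).Nonempty) : c < nextIn C c :=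
  (csInf_mem h).2

theorem nextIn_le (hd : d ∈ C) (hcd : c < d) : nextIn C c ≤ d :=
  csInf_le' ⟨hd, hcd⟩

theorem IsClubIn.nonempty (hC : IsClubIn C o) (ho : IsSuccLimit o) : C.Nonempty :=
  let ⟨c, hc, _⟩ := hC.2.2 0 ho.bot_lt
  ⟨c, hc⟩

theorem IsClubIn.inter_Ioi_nonempty (hC : IsClubIn C o) (ho : IsSuccLimit o) (hc : c < o) :
    (C ∩ Ioi c).Nonempty := by
  obtain ⟨d, hd, hcd⟩ := hC.2.2 (succ c) (ho.succ_lt hc)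
  exact ⟨d, hd, (lt_succ c).trans_le hcd⟩

theorem IsClubIn.induction (hC : IsClubIn C o) {P : Ordinal.{u} → Prop} (base : P (sInf C))
    (succ : ∀ d ∈ C, (C ∩ Ioi d).Nonempty → P d → P (nextIn C d))
    (limit : ∀ c ∈ C, IsSuccLimit c → (∀ β < c, ∃ d ∈ C, β < d ∧ d < c) →
      (∀ d ∈ C, d < c → P d) → P c) :
    ∀ c ∈ C, P c := by
  intro c
  induction c using WellFoundedLT.induction with
  | _ c ih =>
  intro hc
  rcases (C ∩ Iio c).eq_empty_or_nonempty with hempty | hne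
  · have hmin : sInf C = c := (csInf_le' hc).antisymm <| not_lt.1 fun hlt =>
      hempty.subset ⟨csInf_mem ⟨c, hc⟩, hlt⟩
    exact hmin ▸ base
  -- `s ∈ C` by closedness: `c` is the successor of `s` in `C` if `s < c`, a limit of `C` if not.
  set s := sSup (C ∩ Iio c)
  have hsc : s ≤ c := csSup_le hne fun d hd => hd.2.le
  have hsC : s ∈ C := hC.2.1 _ inter_subset_left hne (hsc.trans_lt (hC.1 hc))
  rcases hsc.lt_or_eq with hlt | heq
  · have hnext : nextIn C s = c := (nextIn_le hc hlt).antisymm <| not_lt.1 fun h =>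
      (lt_nextIn ⟨c, hc, hlt⟩).not_ge <|
        le_csSup ⟨c, fun d hd => hd.2.le⟩ ⟨nextIn_mem ⟨c, hc, hlt⟩, h⟩
    exact hnext ▸ succ s hsC ⟨c, hc, hlt⟩ (ih s hlt hsC)
  · have hbetween : ∀ β < c, ∃ d ∈ C, β < d ∧ d < c := fun β hβ => by
      obtain ⟨d, hd, hβd⟩ := (lt_csSup_iff ⟨c, fun d hd => hd.2.le⟩ hne).1 (heq ▸ hβ)
      exact ⟨d, hd.1, hβd, hd.2⟩
    refine limit c hc ?_ hbetween fun d hd hdc => ih d hdc hd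
    obtain ⟨d, hd, hdc⟩ := hne
    refine ⟨not_isMin_iff.2 ⟨d, hdc⟩, isSuccPrelimit_of_succ_lt fun β hβ => ?_⟩
    obtain ⟨e, -, hβe, hec⟩ := hbetween β hβ
    exact (succ_le_of_lt hβe).trans_lt hec

end Club

/-- When `N c` complements `F c`, the layer at `c ∈ C` complements `F c` in `F (nextIn C c)`. -/
noncomputable def clubLayers {L : Type*} [Lattice L] (F N : Ordinal.{u} → L)
    (C : Set Ordinal.{u}) : WithBot C → L
  | ⊥ => F (sInf C)
  | (c : C) => N c ⊓ F (nextIn C c)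

theorem clubLayers_coe {L : Type*} [Lattice L] (F N : Ordinal.{u} → L) (C : Set Ordinal.{u})
    (c : C) : clubLayers F N C c = N c ⊓ F (nextIn C c) :=
  rfl

section Layers

variable {L : Type*} [CompleteLattice L] {C : Set Ordinal.{u}} {o : Ordinal.{u}}
  {F N : Ordinal.{u} → L}

theorem clubLayers_le_of_lt (hC : IsClubIn C o) (hF : MonotoneOn F (Iio o)) {c : C}
    {i : WithBot C} (hi : i < c) : clubLayers F N C i ≤ F c := by
  cases i using WithBot.recBotCoe with
  | bot => exact hF (hC.1 (csInf_mem ⟨c, c.2⟩)) (hC.1 c.2) (csInf_le' c.2)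
  | coe d =>
    have hdc : (d : Ordinal) < c := Subtype.coe_lt_coe.2 (WithBot.coe_lt_coe.1 hi)
    exact inf_le_right.trans <|
      hF (hC.1 (nextIn_mem ⟨c, c.2, hdc⟩)) (hC.1 c.2) (nextIn_le c.2 hdc)

theorem disjoint_clubLayers_coe (hN : ∀ c ∈ C, IsCompl (F c) (N c)) (c : C) :
    Disjoint (F c) (clubLayers F N C c) :=
  (hN c c.2).disjoint.mono_right inf_le_left

theorem sup_clubLayers_coe [IsModularLattice L] (hC : IsClubIn C o) (hF : MonotoneOn F (Iio o))
    (hN : ∀ c ∈ C, IsCompl (F c) (N c)) (c : C) (hc : (C ∩ Ioi (c : Ordinal)).Nonempty) :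
    F c ⊔ clubLayers F N C c = F (nextIn C c) := by
  have hle : F c ≤ F (nextIn C c) :=
    hF (hC.1 c.2) (hC.1 (nextIn_mem hc)) (lt_nextIn hc).le
  rw [clubLayers_coe, ← sup_inf_assoc_of_le _ hle, (hN c c.2).sup_eq_top, top_inf_eq]

theorem iSupIndep_clubLayers [IsModularLattice L] [IsCompactlyGenerated L]
    (hC : IsClubIn C o) (hF : MonotoneOn F (Iio o)) (hN : ∀ c ∈ C, IsCompl (F c) (N c)) :
    iSupIndep (clubLayers F N C) :=
  iSupIndep_of_disjoint_iSup_lt fun i => by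
    cases i using WithBot.recBotCoe with
    | bot => simp
    | coe c =>
      exact (disjoint_clubLayers_coe hN c).symm.mono_right <|
        iSup₂_le fun j hj => clubLayers_le_of_lt hC hF hj

theorem le_iSup_clubLayers [IsModularLattice L] (hC : IsClubIn C o) (hF : MonotoneOn F (Iio o))
    (hlim : ∀ α < o, IsSuccLimit α → F α = ⨆ β < α, F β)
    (hN : ∀ c ∈ C, IsCompl (F c) (N c)) : ∀ c ∈ C, F c ≤ ⨆ i, clubLayers F N C i := by
  refine hC.induction (le_iSup_of_le ⊥ le_rfl) (fun d hd hne ih => ?_)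
    fun c hc hc' hbetween ih => ?_
  · rw [← sup_clubLayers_coe hC hF hN ⟨d, hd⟩ hne]
    exact sup_le ih (le_iSup_of_le (⟨d, hd⟩ : C) le_rfl)
  · rw [hlim c (hC.1 hc) hc']
    refine iSup₂_le fun β hβ => ?_
    obtain ⟨d, hd, hβd, hdc⟩ := hbetween β hβ
    exact (hF (hβ.trans (hC.1 hc)) (hC.1 hd) hβd.le).trans (ih d hd hdc)

theorem iSup_clubLayers_eq_top [IsModularLattice L] (hC : IsClubIn C o)
    (hF : MonotoneOn F (Iio o)) (hlim : ∀ α < o, IsSuccLimit α → F α = ⨆ β < α, F β)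
    (hN : ∀ c ∈ C, IsCompl (F c) (N c)) (htop : ⨆ α : Iio o, F α = ⊤) :
    ⨆ i, clubLayers F N C i = ⊤ := by
  refine top_unique <| htop ▸ iSup_le fun α => ?_
  obtain ⟨c, hc, hαc⟩ := hC.2.2 α α.2
  exact (hF α.2 (hC.1 hc) hαc).trans (le_iSup_clubLayers hC hF hlim hN c hc)

theorem exists_isCompl_clubLayers [IsModularLattice L] (hC : IsClubIn C o) (ho : IsSuccLimit o)
    (hF : MonotoneOn F (Iio o)) (hN : ∀ c ∈ C, IsCompl (F c) (N c)) (i : WithBot C) :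
    ∃ P, IsCompl (clubLayers F N C i) P := by
  cases i using WithBot.recBotCoe with
  | bot => exact ⟨_, hN _ (csInf_mem (hC.nonempty ho))⟩
  | coe c =>
    have hc := hC.inter_Ioi_nonempty ho (hC.1 c.2)
    refine ⟨F c ⊔ N (nextIn C c),
      (disjoint_clubLayers_coe hN c).symm.isCompl_sup_right_of_isCompl_sup_left ?_⟩
    rw [sup_comm, sup_clubLayers_coe hC hF hN c hc]
    exact hN _ (nextIn_mem hc)

theorem exists_clubLayers_le (hC : IsClubIn C o) (ho : IsSuccLimit o) (i : WithBot C) :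
    ∃ γ < o, clubLayers F N C i ≤ F γ := by
  cases i using WithBot.recBotCoe with
  | bot => exact ⟨_, hC.1 (csInf_mem (hC.nonempty ho)), le_rfl⟩
  | coe c => exact ⟨_, hC.1 (nextIn_mem (hC.inter_Ioi_nonempty ho (hC.1 c.2))), inf_le_right⟩

end Layers

theorem stmt8_general
    {R : Type u} [Ring R] {M : Type u} [AddCommGroup M] [Module R M]
    (X : Type u) [AddCommGroup X] [Module R X]
    (κ : Cardinal.{u}) (hκ : κ.IsRegular)
    (Mfil : Ordinal.{u} → Submodule R M)
    (hmono : ∀ α β : Ordinal.{u}, α ≤ β → β < κ.ord → Mfil α ≤ Mfil β)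
    (hlim : ∀ α : Ordinal.{u}, α < κ.ord → Order.IsSuccLimit α → Mfil α = ⨆ β < α, Mfil β)
    (hunion : ⨆ α : Set.Iio κ.ord, Mfil α.1 = ⊤)
    (hadd : ∀ α < κ.ord, InAdd R X (Mfil (α + 1)))
    (hns : ¬ IsStationaryIn
      {α : Ordinal.{u} | α < κ.ord ∧ ¬ ∃ N' : Submodule R M, IsCompl (Mfil α) N'}
      κ.ord) :
    InAdd R X M := by
  have ho : IsSuccLimit κ.ord := Cardinal.isSuccLimit_ord hκ.aleph0_le
  have hF : MonotoneOn Mfil (Iio κ.ord) := fun α _ β hβ hαβ => hmono α β hαβ hβ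
  obtain ⟨C, hC, hCE⟩ : ∃ C, IsClubIn C κ.ord ∧
      {α | α < κ.ord ∧ ¬ ∃ N' : Submodule R M, IsCompl (Mfil α) N'} ∩ C = ∅ := by
    simpa [IsStationaryIn, ← not_nonempty_iff_eq_empty] using hns
  have hsummand : ∀ c ∈ C, ∃ N, IsCompl (Mfil c) N := fun c hc =>
    by_contra fun h => hCE.subset ⟨⟨hC.1 hc, h⟩, hc⟩
  choose! N hN using hsummand
  refine InAdd.of_sSupIndep (iSupIndep_clubLayers hC hF hN).sSupIndep_range
    (by rw [sSup_range]; exact iSup_clubLayers_eq_top hC hF hlim hN hunion) ?_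
  rintro _ ⟨i, rfl⟩
  obtain ⟨P, hP⟩ := exists_isCompl_clubLayers hC ho hF hN i
  obtain ⟨γ, hγ, hle⟩ := exists_clubLayers_le (F := Mfil) (N := N) hC ho i
  have hγ' : γ + 1 < κ.ord := succ_eq_add_one γ ▸ ho.succ_lt hγ
  exact (hadd γ hγ).of_isCompl_of_le hP (hle.trans (hF hγ hγ' le_self_add))

/-- If `M` has a `κ`-filtration with successor members in `Add(X)` and the set of stages
which are not direct summands of `M` is non-stationary, then `M ∈ Add(X)`. -/
theorem stmt8
    {R : Type u} [Ring R] {M : Type u} [AddCommGroup M] [Module R M]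
    (X : Type u) [AddCommGroup X] [Module R X]
    (κ : Cardinal.{u}) (hκ : κ.IsRegular) (hunc : ℵ₀ < κ)
    (Mfil : Ordinal.{u} → Submodule R M)
    (hmono : ∀ α β : Ordinal.{u}, α ≤ β → β < κ.ord → Mfil α ≤ Mfil β)
    (hlim : ∀ α : Ordinal.{u}, α < κ.ord → Order.IsSuccLimit α → Mfil α = ⨆ β < α, Mfil β)
    (hunion : ⨆ α : Set.Iio κ.ord, Mfil α.1 = ⊤)
    (hgen : ∀ α < κ.ord, ∃ S : Set M, Cardinal.mk S < κ ∧ Submodule.span R S = Mfil α)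
    (hadd : ∀ α < κ.ord, InAdd R X (Mfil (α + 1)))
    (hns : ¬ IsStationaryIn
      {α : Ordinal.{u} | α < κ.ord ∧ ¬ ∃ N' : Submodule R M, IsCompl (Mfil α) N'}
      κ.ord) :
    InAdd R X M :=
  stmt8_general X κ hκ Mfil hmono hlim hunion hadd hns
end
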